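/- Let G be a finite simple graph with vertex set V and edge set E, and let U = |E|. Then the number of partitions of V all of whose blocks are cliques of G is at most 2^U. -/

import Mathlib

/-!
A partition of a finite set is determined by which pairs of distinct elements share a block.
For a partition into cliques of `G` every such pair is an edge of `G`, so sending a partition to
its set of within-block pairs injects clique partitions into the subsets of the edge set.
-/

open Finset

namespace Finpartition

variable {α : Type*} [DecidableEq α] {s : Finset α}

lemma parts_eq_image_part (P : Finpartition s) : P.parts = s.image P.part := by
  ext t
  constructor
  · intro ht
    obtain ⟨a, ha, rfl⟩ := P.part_surjOn ht
    exact mem_image_of_mem _ ha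
  · intro ht
    obtain ⟨a, ha, rfl⟩ := mem_image.1 ht
    exact P.part_mem.2 ha

lemma ext_part {P Q : Finpartition s} (h : ∀ a ∈ s, P.part a = Q.part a) : P = Q :=
  Finpartition.ext <| by rw [parts_eq_image_part, parts_eq_image_part, image_congr h]

def offDiagPairs (P : Finpartition s) : Finset (Sym2 α) :=
  P.parts.biUnion fun t => t.sym2.filter fun e => ¬e.IsDiag

lemma mk_mem_offDiagPairs {P : Finpartition s} {a b : α} :
    s(a, b) ∈ P.offDiagPairs ↔ a ≠ b ∧ a ∈ P.part b := by
  simp only [offDiagPairs, mem_biUnion, mem_filter, mk_mem_sym2_iff, Sym2.mk_isDiag_iff,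
    mem_part_iff_exists]
  constructor
  · rintro ⟨t, ht, ⟨hat, hbt⟩, hab⟩
    exact ⟨hab, t, ht, hat, hbt⟩
  · rintro ⟨hab, t, ht, hat, hbt⟩
    exact ⟨t, ht, ⟨hat, hbt⟩, hab⟩

lemma offDiagPairs_injective : Function.Injective (offDiagPairs (s := s)) := by
  intro P Q hPQ
  refine ext_part fun a ha => Finset.ext fun b => ?_
  by_cases hba : b = a
  · subst hba
    simp only [mem_part_self, ha]
  · simpa only [mk_mem_offDiagPairs, hba, Ne, not_false_eq_true, true_and] using
      Iff.of_eq (congrArg (s(b, a) ∈ ·) hPQ)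

end Finpartition

lemma SimpleGraph.offDiagPairs_subset_edgeFinset {V : Type*} [DecidableEq V] {s : Finset V}
    {G : SimpleGraph V} [Fintype G.edgeSet] {P : Finpartition s}
    (hP : ∀ t ∈ P.parts, G.IsClique (t : Set V)) : P.offDiagPairs ⊆ G.edgeFinset := by
  intro e he
  induction e using Sym2.ind with
  | h a b =>
    obtain ⟨hab, hap⟩ := Finpartition.mk_mem_offDiagPairs.1 he
    have hb : b ∈ s := P.part_nonempty.1 ⟨a, hap⟩
    exact G.mem_edgeFinset.2 <|
      hP _ (P.part_mem.2 hb) hap (P.mem_part_self.2 hb) hab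

/-- For a finite simple graph G with U edges, the number of partitions of the
vertex set all of whose blocks are cliques of G is at most 2^U. -/
theorem card_clique_partitions_le {V : Type*} [Fintype V] [DecidableEq V]
    (G : SimpleGraph V) [DecidableRel G.Adj] :
    Nat.card {P : Finpartition (Finset.univ : Finset V) //
        ∀ s ∈ P.parts, G.IsClique (s : Set V)}
      ≤ 2 ^ G.edgeFinset.card := by
  let edges : {P : Finpartition (univ : Finset V) // ∀ s ∈ P.parts, G.IsClique (s : Set V)} →
      G.edgeFinset.powerset := fun P =>
    ⟨P.1.offDiagPairs, mem_powerset.2 (G.offDiagPairs_subset_edgeFinset P.2)⟩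
  have edges_injective : Function.Injective edges := fun P Q h =>
    Subtype.ext (Finpartition.offDiagPairs_injective (congrArg Subtype.val h))
  calc _ ≤ Nat.card G.edgeFinset.powerset := Nat.card_le_card_of_injective edges edges_injective
    _ = 2 ^ G.edgeFinset.card := by rw [Nat.card_eq_finsetCard, card_powerset]
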